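/- Let B be a unital complex C*-algebra containing a dimension-drop system (s, f_{j,k}) of size n, set b = s*s + ∑_{j=1}^n f_{j,1} s s* f_{1,j}, and assume b = t·1 for some real t with 0 < t < 1. With c_{j,k} = (t − t²)^{-1} s f_{1,j} s* f_{1,k} and d_l = (√t (1−t))^{-1} s f_{1,l}, the following hold: (i) √t · ∑_{j=1}^n c_{j,1}* d_j = s; and (ii) f_{1,j} = ∑_{k=1}^n c_{k,1}* c_{k,j} + (1−t) d_1* d_j for every 1 ≤ j ≤ n. -/

import Mathlib

/-!
Since `f 0 0 * s = s` and the `f k k` are mutually orthogonal, `s* s = 1 - ∑ k, f k k` commutes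
with every `f j k` and `s* s s = 0`. Multiplying `b = t` on the left by `f 0 j` therefore gives
`(s s* + s* s) f 0 j = t f 0 j`, in particular `s s* s = t s`, so `s* s` is `t` times a
projection and `s ∑ k, f k k = (1 - t) s`. As `∑ k, f k 0 s* s f 0 k = (∑ k, f k k)² s* s`, this
yields `s ∑ k, f k 0 s* s f 0 k = t (1 - t)² s`, and both identities reduce to it and to
`f 0 0 s* s f 0 j = (1 - t) s* s f 0 j` once the scalars are collected.
-/

/-- A *dimension-drop system* of size `n` in a unital C*-algebra `B`: elements `s` and
`f j k` (for `j k : Fin n`, where the index `0` plays the role of `1` in the paper) of norm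
at most one satisfying the relations (R1)–(R4). -/
def IsDimDropSystem {B : Type*} [CStarAlgebra B] {n : ℕ} [NeZero n]
    (s : B) (f : Fin n → Fin n → B) : Prop :=
  ‖s‖ ≤ 1 ∧ (∀ j k, ‖f j k‖ ≤ 1) ∧
    (∀ j k, star (f j k) = f k j) ∧
    (∀ j k l m, f j k * f l m = if k = l then f j j * f j m else 0) ∧
    f 0 0 * s = s ∧
    (∑ j, f j j) + star s * s = 1

lemma star_mul_self_mul_star_mul_self {R A : Type*} [Semigroup A] [Star A] [SMul R A]
    [SMulCommClass R A A] {s : A} {τ : R}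
    (hτ : s * star s * s = τ • s) : star s * s * (star s * s) = τ • (star s * s) := by
  simp only [mul_assoc] at hτ ⊢
  rw [hτ, mul_smul_comm]

/-- The paper's `c j k` without the factor `(t - t²)⁻¹`. -/
def dimDropC {B : Type*} [Mul B] [Star B] {n : ℕ} [NeZero n] (s : B) (f : Fin n → Fin n → B)
    (j k : Fin n) : B :=
  s * f 0 j * star s * f 0 k

/-- The paper's `d l` without the factor `(√t (1 - t))⁻¹`. -/
def dimDropD {B : Type*} [Mul B] {n : ℕ} [NeZero n] (s : B) (f : Fin n → Fin n → B)
    (l : Fin n) : B :=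
  s * f 0 l

namespace IsDimDropSystem

variable {B : Type*} [CStarAlgebra B] {n : ℕ} [NeZero n] {s : B} {f : Fin n → Fin n → B}

lemma star_f (h : IsDimDropSystem s f) (j k : Fin n) : star (f j k) = f k j := h.2.2.1 j k

lemma f_mul_f (h : IsDimDropSystem s f) (j k l m : Fin n) :
    f j k * f l m = if k = l then f j j * f j m else 0 := h.2.2.2.1 j k l m

lemma f_zero_zero_mul (h : IsDimDropSystem s f) : f 0 0 * s = s := h.2.2.2.2.1

lemma star_mul_self_eq (h : IsDimDropSystem s f) : star s * s = 1 - ∑ k, f k k :=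
  eq_sub_of_add_eq' h.2.2.2.2.2

lemma sum_diag_eq (h : IsDimDropSystem s f) : ∑ k, f k k = 1 - star s * s :=
  eq_sub_of_add_eq h.2.2.2.2.2

lemma sum_diag_mul (h : IsDimDropSystem s f) (l j : Fin n) :
    (∑ k, f k k) * f l j = f l l * f l j := by
  rw [Finset.sum_mul, Finset.sum_eq_single l (fun k _ hk => by simp [h.f_mul_f, hk])
    (by simp), h.f_mul_f, if_pos rfl]

lemma mul_sum_diag (h : IsDimDropSystem s f) (j l : Fin n) :
    f j l * ∑ k, f k k = f j j * f j l := by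
  rw [Finset.mul_sum, Finset.sum_eq_single l (fun k _ hk => by simp [h.f_mul_f, hk.symm])
    (by simp), h.f_mul_f, if_pos rfl]

lemma sum_diag_mul_self (h : IsDimDropSystem s f) : (∑ k, f k k) * s = s := by
  conv_lhs => rw [← h.f_zero_zero_mul, ← mul_assoc, h.sum_diag_mul, mul_assoc,
    h.f_zero_zero_mul, h.f_zero_zero_mul]

lemma star_mul_self_mul_self (h : IsDimDropSystem s f) : star s * s * s = 0 := by
  rw [h.star_mul_self_eq, sub_mul, h.sum_diag_mul_self, one_mul, sub_self]

lemma star_mul_self_mul_f (h : IsDimDropSystem s f) (j k : Fin n) :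
    star s * s * f j k = f j k - f j j * f j k := by
  rw [h.star_mul_self_eq, sub_mul, one_mul, h.sum_diag_mul]

lemma f_mul_star_mul_self (h : IsDimDropSystem s f) (j k : Fin n) :
    f j k * (star s * s) = f j k - f j j * f j k := by
  rw [h.star_mul_self_eq, mul_sub, mul_one, h.mul_sum_diag]

lemma commute_star_mul_self_f (h : IsDimDropSystem s f) (j k : Fin n) :
    Commute (star s * s) (f j k) :=
  (h.star_mul_self_mul_f j k).trans (h.f_mul_star_mul_self j k).symm

lemma sum_diag_sq (h : IsDimDropSystem s f) : (∑ k, f k k) ^ 2 = ∑ k, f k k ^ 2 := by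
  rw [sq, Finset.sum_mul]
  exact Finset.sum_congr rfl fun k _ => by rw [h.mul_sum_diag, sq]

lemma sum_f_mul_star_mul_self_mul_f (h : IsDimDropSystem s f) :
    ∑ k, f k 0 * (star s * s) * f 0 k = (∑ k, f k k) ^ 2 * (star s * s) := by
  rw [h.sum_diag_sq, Finset.sum_mul]
  refine Finset.sum_congr rfl fun k _ => ?_
  rw [mul_assoc, (h.commute_star_mul_self_f 0 k).eq, ← mul_assoc, h.f_mul_f, if_pos rfl, sq]

lemma mul_star_mul_f_add_star_mul_self_mul_f {τ : ℂ} (h : IsDimDropSystem s f)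
    (hb : star s * s + ∑ j, f j 0 * (s * star s) * f 0 j = τ • (1 : B)) (j : Fin n) :
    s * star s * f 0 j + star s * s * f 0 j = τ • f 0 j := by
  have hf : ∀ x, f 0 0 * (s * x) = s * x := fun x => by rw [← mul_assoc, h.f_zero_zero_mul]
  have term : ∀ k, f 0 j * (f k 0 * (s * star s) * f 0 k) =
      if j = k then s * star s * f 0 j else 0 := fun k => by
    rw [← mul_assoc, ← mul_assoc, h.f_mul_f]
    split_ifs with hjk
    · subst hjk; simp only [mul_assoc, hf]
    · simp only [zero_mul]
  have key := congrArg (f 0 j * ·) hb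
  simp only [mul_add, Finset.mul_sum, term, Finset.sum_ite_eq, Finset.mem_univ, if_true,
    mul_smul_comm, mul_one] at key
  rw [← (h.commute_star_mul_self_f 0 j).eq, add_comm] at key
  exact key

lemma mul_star_mul_self {τ : ℂ} (h : IsDimDropSystem s f)
    (hb : star s * s + ∑ j, f j 0 * (s * star s) * f 0 j = τ • (1 : B)) :
    s * star s * s = τ • s := by
  have key := congrArg (· * s) (h.mul_star_mul_f_add_star_mul_self_mul_f hb 0)
  simp only [add_mul, smul_mul_assoc, mul_assoc, h.f_zero_zero_mul] at key
  rwa [← mul_assoc (star s), h.star_mul_self_mul_self, add_zero, ← mul_assoc] at key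

lemma mul_sum_diag_self {τ : ℂ} (h : IsDimDropSystem s f) (hτ : s * star s * s = τ • s) :
    s * ∑ k, f k k = (1 - τ) • s := by
  rw [h.sum_diag_eq, mul_sub, mul_one, ← mul_assoc, hτ, sub_smul, one_smul]

lemma sum_diag_mul_star_mul_self {τ : ℂ} (h : IsDimDropSystem s f)
    (hτ : s * star s * s = τ • s) :
    (∑ k, f k k) * (star s * s) = (1 - τ) • (star s * s) := by
  rw [h.sum_diag_eq, sub_mul, one_mul, star_mul_self_mul_star_mul_self hτ, sub_smul, one_smul]

lemma f_zero_zero_mul_star_mul_self_mul_f {τ : ℂ} (h : IsDimDropSystem s f)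
    (hτ : s * star s * s = τ • s) (j : Fin n) :
    f 0 0 * (star s * s * f 0 j) = (1 - τ) • (star s * s * f 0 j) := by
  have hc := (h.commute_star_mul_self_f 0 j).eq
  calc f 0 0 * (star s * s * f 0 j) = (∑ k, f k k) * f 0 j * (star s * s) := by
        rw [h.sum_diag_mul, hc, mul_assoc]
    _ = (1 - τ) • (star s * s * f 0 j) := by
        rw [mul_assoc, ← hc, ← mul_assoc, h.sum_diag_mul_star_mul_self hτ, smul_mul_assoc]

lemma mul_sum_f_mul_star_mul_self_mul_f {τ : ℂ} (h : IsDimDropSystem s f)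
    (hτ : s * star s * s = τ • s) :
    s * ∑ k, f k 0 * (star s * s) * f 0 k = (τ * (1 - τ) ^ 2) • s := by
  calc s * ∑ k, f k 0 * (star s * s) * f 0 k
        = (s * ∑ k, f k k) * (∑ k, f k k) * star s * s := by
          rw [h.sum_f_mul_star_mul_self_mul_f, sq]; simp only [mul_assoc]
    _ = ((1 - τ) ^ 2 * τ) • s := by
          simp only [h.mul_sum_diag_self hτ, smul_mul_assoc, hτ, smul_smul, sq]
    _ = (τ * (1 - τ) ^ 2) • s := by rw [mul_comm]

lemma sum_star_dimDropC_mul_dimDropD {τ : ℂ} (h : IsDimDropSystem s f)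
    (hτ : s * star s * s = τ • s) :
    ∑ j, star (dimDropC s f j 0) * dimDropD s f j = (τ * (1 - τ) ^ 2) • s := by
  have term : ∀ j, star (dimDropC s f j 0) * dimDropD s f j =
      f 0 0 * (s * (f j 0 * (star s * s) * f 0 j)) := fun j => by
    simp only [dimDropC, dimDropD, star_mul, star_star, h.star_f, mul_assoc]
  rw [Finset.sum_congr rfl fun j _ => term j, ← Finset.mul_sum, ← Finset.mul_sum,
    h.mul_sum_f_mul_star_mul_self_mul_f hτ, mul_smul_comm, h.f_zero_zero_mul]

lemma sum_star_dimDropC_mul_dimDropC {τ : ℂ} (h : IsDimDropSystem s f)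
    (hτ : s * star s * s = τ • s) (j : Fin n) :
    ∑ k, star (dimDropC s f k 0) * dimDropC s f k j =
      (τ * (1 - τ) ^ 2) • (s * star s * f 0 j) := by
  have term : ∀ k, star (dimDropC s f k 0) * dimDropC s f k j =
      f 0 0 * (s * (f k 0 * (star s * s) * f 0 k) * (star s * f 0 j)) := fun k => by
    simp only [dimDropC, star_mul, star_star, h.star_f, mul_assoc]
  rw [Finset.sum_congr rfl fun k _ => term k, ← Finset.mul_sum, ← Finset.sum_mul,
    ← Finset.mul_sum, h.mul_sum_f_mul_star_mul_self_mul_f hτ, smul_mul_assoc, mul_smul_comm,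
    ← mul_assoc, h.f_zero_zero_mul, mul_assoc]

lemma star_dimDropD_mul_dimDropD {τ : ℂ} (h : IsDimDropSystem s f)
    (hτ : s * star s * s = τ • s) (j : Fin n) :
    star (dimDropD s f 0) * dimDropD s f j = (1 - τ) • (star s * s * f 0 j) := by
  rw [← h.f_zero_zero_mul_star_mul_self_mul_f hτ]
  simp only [dimDropD, star_mul, h.star_f, mul_assoc]

end IsDimDropSystem

/-- if `b = s*s + ∑ j, f j 0 * s * s* * f 0 j` equals `t • 1` for some
`0 < t < 1`, then with `c j k = (t - t²)⁻¹ • s * f 0 j * s* * f 0 k` and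
`d l = (√t (1 - t))⁻¹ • s * f 0 l` one has
`√t • ∑ j, (c j 0)* * d j = s` and `f 0 j = ∑ k, (c k 0)* * c k j + (1 - t) • (d 0)* * d j`. -/
theorem dimDropSystem_fiber_generation {B : Type*} [CStarAlgebra B] {n : ℕ} [NeZero n]
    (s : B) (f : Fin n → Fin n → B) (hsys : IsDimDropSystem s f)
    (t : ℝ) (ht0 : 0 < t) (ht1 : t < 1)
    (hb : star s * s + ∑ j, f j 0 * (s * star s) * f 0 j = (t : ℂ) • (1 : B))
    (c : Fin n → Fin n → B) (d : Fin n → B)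
    (hc : ∀ j k, c j k = (((t - t ^ 2 : ℝ) : ℂ))⁻¹ • (s * f 0 j * star s * f 0 k))
    (hd : ∀ l, d l = (((Real.sqrt t * (1 - t) : ℝ) : ℂ))⁻¹ • (s * f 0 l)) :
    (((Real.sqrt t : ℝ) : ℂ) • ∑ j, star (c j 0) * d j = s) ∧
      (∀ j, f 0 j = (∑ k, star (c k 0) * c k j) + ((1 - t : ℝ) : ℂ) • (star (d 0) * d j)) := by
  have hc' : ∀ j k, c j k = (((t - t ^ 2 : ℝ) : ℂ))⁻¹ • dimDropC s f j k := hc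
  have hd' : ∀ l, d l = (((Real.sqrt t * (1 - t) : ℝ) : ℂ))⁻¹ • dimDropD s f l := hd
  have hτ := hsys.mul_star_mul_self hb
  have ht : (t : ℂ) ≠ 0 := by exact_mod_cast ht0.ne'
  have h1t : (1 - t : ℂ) ≠ 0 := by exact_mod_cast (sub_pos.mpr ht1).ne'
  have hsqrt : ((Real.sqrt t : ℝ) : ℂ) ^ 2 = t := by exact_mod_cast Real.sq_sqrt ht0.le
  have hsqrt0 : ((Real.sqrt t : ℝ) : ℂ) ≠ 0 := by exact_mod_cast (Real.sqrt_pos.mpr ht0).ne'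
  simp only [hc', hd', star_smul, star_inv₀, RCLike.star_def, Complex.conj_ofReal,
    smul_mul_smul_comm, ← Finset.smul_sum, smul_smul]
  constructor
  · rw [hsys.sum_star_dimDropC_mul_dimDropD hτ, smul_smul]
    convert one_smul ℂ s
    push_cast
    field_simp
  · intro j
    rw [hsys.sum_star_dimDropC_mul_dimDropC hτ, hsys.star_dimDropD_mul_dimDropD hτ,
      eq_sub_of_add_eq (hsys.mul_star_mul_f_add_star_mul_self_mul_f hb j)]
    match_scalars
    · field_simp
    · field_simp
      linear_combination hsqrt
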